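/- arXiv:0801.1288 — 7 statements merged into one kernel-verified Lean document; each statement's English description precedes it below -/
import Mathlib

section
/- Let K be a field, V a finite-dimensional K-vector space of dimension n ≥ 1, and w : V → ℝ a function satisfying w(x + y) ≤ max(w(x), w(y)) for all x, y ∈ V and w(c·x) = w(x) for all x ∈ V and all nonzero scalars c ∈ K. Then: (a) for every real ρ with ρ ≥ w(0), the set Ω(ρ) := {x ∈ V : w(x) ≤ ρ} is a K-subspace of V; and (b) there exists a basis b_1, …, b_n of V such that for every real ρ ≥ w(0) one has #{k : w(b_k) ≤ ρ} = dim Ω(ρ), and such that for every basis b′_1, …, b′_n of V one has ∑_{k=1}^n w(b_k) ≤ ∑_{k=1}^n w(b′_k); that is, the basis b achieves the minimum possible total weight among all bases of V. -/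
/-!
Sublevel sets of `w` are subspaces forming a chain, so distinct values of `w` give subspaces of
distinct dimensions and `w` takes at most `dim V + 1` values. Extending linearly independent sets
along this finite flag yields a basis `b` such that each sublevel set `{w ≤ ρ}` is spanned by the
vectors of `b` of weight `≤ ρ`; this is the profile identity. Any other basis has at most
`dim Ω(ρ)` vectors of weight `≤ ρ`, so its weight-counting function is dominated by that of `b`,
and comparing the sorted weights termwise gives the minimality of `∑ w (b k)`.
-/

open Module Submodule Finset

theorem LinearIndependent.finrank_span_image_setOf {K V ι : Type*} [DivisionRing K]
    [AddCommGroup V] [Module K V] [Fintype ι] {b : ι → V} (hb : LinearIndependent K b)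
    (p : ι → Prop) [DecidablePred p] :
    finrank K (span K (b '' {i | p i})) = #{i | p i} := by
  rw [Set.image_eq_range]
  exact (finrank_span_eq_card (hb.comp _ Subtype.val_injective)).trans (Fintype.card_subtype p)

theorem LinearIndependent.card_filter_le_finrank_span {K V ι : Type*} [DivisionRing K]
    [AddCommGroup V] [Module K V] [FiniteDimensional K V] [Fintype ι] {b : ι → V}
    (hb : LinearIndependent K b) (s : Set V) [DecidablePred (· ∈ s)] :
    #{i | b i ∈ s} ≤ finrank K (span K s) := by
  rw [← hb.finrank_span_image_setOf]
  exact Submodule.finrank_mono (span_mono (Set.image_subset_iff.2 fun _ h => h))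

theorem Monotone.le_iff_lt_card_filter_le {α : Type*} [LinearOrder α] {n : ℕ} {f : Fin n → α}
    (hf : Monotone f) (k : Fin n) (a : α) : f k ≤ a ↔ k < #{i | f i ≤ a} := by
  constructor
  · intro h
    calc (k : ℕ) < #(Iic k) := by rw [Fin.card_Iic]; omega
      _ ≤ #{i | f i ≤ a} := card_le_card fun i hi => by
        simp only [mem_filter, mem_univ, true_and]; exact (hf (mem_Iic.1 hi)).trans h
  · intro h
    by_contra! hlt
    have : #{i | f i ≤ a} ≤ #(Iio k) := card_le_card fun i hi => by
      simp only [mem_filter, mem_univ, true_and] at hi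
      exact mem_Iio.2 (lt_of_not_ge fun hki => (hlt.trans_le (hf hki)).not_ge hi)
    rw [Fin.card_Iio] at this
    omega

theorem card_filter_comp_equiv {ι : Type*} [Fintype ι] (e : ι ≃ ι) (p : ι → Prop)
    [DecidablePred p] : #{i | p (e i)} = #{i | p i} :=
  card_equiv e (by simp)

theorem sum_le_sum_of_card_filter_le {n : ℕ} {f g : Fin n → ℝ}
    (h : ∀ a, #{i | g i ≤ a} ≤ #{i | f i ≤ a}) : ∑ i, f i ≤ ∑ i, g i := by
  rw [← Equiv.sum_comp (Tuple.sort f) f, ← Equiv.sum_comp (Tuple.sort g) g]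
  refine sum_le_sum fun k _ => ?_
  refine ((Tuple.monotone_sort f).le_iff_lt_card_filter_le k _).2 ?_
  calc (k : ℕ) < #{i | g (Tuple.sort g i) ≤ g (Tuple.sort g k)} :=
        ((Tuple.monotone_sort g).le_iff_lt_card_filter_le k _).1 le_rfl
    _ = #{i | g i ≤ g (Tuple.sort g k)} := card_filter_comp_equiv (Tuple.sort g) (g · ≤ _)
    _ ≤ #{i | f i ≤ g (Tuple.sort g k)} := h _
    _ = #{i | (f ∘ Tuple.sort f) i ≤ g (Tuple.sort g k)} :=
        (card_filter_comp_equiv (Tuple.sort f) (f · ≤ _)).symm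

theorem exists_linearIndepOn_setOf_le_subset_span {K V : Type*} [DivisionRing K]
    [AddCommGroup V] [Module K V] (w : V → ℝ) (T : Finset ℝ) :
    ∃ s : Set V, LinearIndepOn K id s ∧ (∀ y ∈ s, ∃ a ∈ T, w y ≤ a) ∧
      ∀ a ∈ T, {x | w x ≤ a} ⊆ span K {y ∈ s | w y ≤ a} := by
  classical
  induction T using Finset.induction_on_max with
  | empty => exact ⟨∅, linearIndepOn_empty K id, by simp, by simp⟩
  | insert a T hlt ih =>
    obtain ⟨s, hs, hsT, hspan⟩ := ih
    have hsa : s ⊆ {x | w x ≤ a} := fun y hy =>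
      let ⟨c, hc, hyc⟩ := hsT y hy
      hyc.trans (hlt c hc).le
    obtain ⟨s', hs'a, hss', ha, hs'⟩ := exists_linearIndepOn_id_extension hs hsa
    refine ⟨s', hs', fun y hy => ⟨a, mem_insert_self a T, hs'a hy⟩, ?_⟩
    simp only [mem_insert, forall_eq_or_imp]
    refine ⟨ha.trans (span_mono fun y hy => ⟨hy, hs'a hy⟩), fun c hc => ?_⟩
    exact (hspan c hc).trans (span_mono fun y hy => ⟨hss' hy.1, hy.2⟩)

namespace IsNonarchimedean

variable {K V : Type*} [Field K] [AddCommGroup V] [Module K V] {w : V → ℝ}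
  (hna : IsNonarchimedean w) (hsmul : ∀ c : K, c ≠ 0 → ∀ x : V, w (c • x) = w x)
include hna hsmul

theorem apply_zero_le (x : V) : w 0 ≤ w x :=
  calc w 0 = w (x + (-1 : K) • x) := by rw [neg_one_smul, add_neg_cancel]
    _ ≤ max (w x) (w ((-1 : K) • x)) := hna _ _
    _ = w x := by rw [hsmul _ (neg_ne_zero.2 one_ne_zero), max_self]

def sublevel (ρ : ℝ) (hρ : w 0 ≤ ρ) : Submodule K V where
  carrier := {x | w x ≤ ρ}
  add_mem' ha hb := (hna _ _).trans (max_le ha hb)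
  zero_mem' := hρ
  smul_mem' c x hx := by
    rcases eq_or_ne c 0 with rfl | hc
    · rwa [zero_smul]
    · change w (c • x) ≤ ρ
      rwa [hsmul c hc]

theorem mem_span_setOf_le_iff {ρ : ℝ} (hρ : w 0 ≤ ρ) {x : V} :
    x ∈ span K {y | w y ≤ ρ} ↔ w x ≤ ρ := by
  rw [show {y | w y ≤ ρ} = (hna.sublevel hsmul ρ hρ : Set V) from rfl, span_eq]
  rfl

theorem finite_range [FiniteDimensional K V] : (Set.range w).Finite := by
  have hmono : StrictMonoOn (fun ρ => finrank K (span K {x | w x ≤ ρ})) (Set.range w) := by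
    rintro _ ⟨x, rfl⟩ _ ⟨y, rfl⟩ hxy
    refine Submodule.finrank_lt_finrank_of_lt (SetLike.lt_iff_le_and_exists.2
      ⟨span_mono fun z hz => le_trans hz hxy.le, y, subset_span (le_refl (w y)), fun hy => ?_⟩)
    exact ((hna.mem_span_setOf_le_iff hsmul (hna.apply_zero_le hsmul x)).1 hy).not_gt hxy
  refine Set.Finite.of_finite_image ((Set.finite_Iic (finrank K V)).subset ?_) hmono.injOn
  rintro _ ⟨ρ, -, rfl⟩
  exact Submodule.finrank_le _

theorem exists_basis_span_setOf_le_eq [FiniteDimensional K V] {n : ℕ}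
    (hrank : finrank K V = n) :
    ∃ b : Basis (Fin n) K V, ∀ ρ, span K {x | w x ≤ ρ} = span K (b '' {k | w (b k) ≤ ρ}) := by
  obtain ⟨s, hs, -, hspan⟩ := exists_linearIndepOn_setOf_le_subset_span (K := K) w
    (hna.finite_range hsmul).toFinset
  have adapted (ρ : ℝ) : {x | w x ≤ ρ} ⊆ span K {y ∈ s | w y ≤ ρ} := fun x hx => by
    refine span_mono ?_ (hspan (w x) (by simp) (le_refl (w x)))
    exact fun y hy => ⟨hy.1, hy.2.trans hx⟩
  have hs_top : ⊤ ≤ span K s := fun x _ =>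
    span_mono (fun y hy => hy.1) (adapted (w x) (le_refl (w x)))
  let b₀ := Basis.mk hs (by simpa using hs_top)
  let b := b₀.reindex (b₀.indexEquiv (finBasisOfFinrankEq K V hrank))
  have hrange : Set.range b = s := by simp [b, b₀]
  refine ⟨b, fun ρ => le_antisymm ?_ (span_mono ?_)⟩
  · change _ ≤ span K (b '' (b ⁻¹' {y | w y ≤ ρ}))
    rw [span_le, Set.image_preimage_eq_range_inter, hrange]
    exact adapted ρ
  · rintro _ ⟨k, hk, rfl⟩
    exact hk

end IsNonarchimedean

theorem stmt1_general (K : Type*) [Field K] (V : Type*) [AddCommGroup V] [Module K V]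
    [FiniteDimensional K V] (n : ℕ)
    (hrank : Module.finrank K V = n)
    (w : V → ℝ)
    (hadd : ∀ x y : V, w (x + y) ≤ max (w x) (w y))
    (hsmul : ∀ c : K, c ≠ 0 → ∀ x : V, w (c • x) = w x) :
    (∀ ρ : ℝ, w 0 ≤ ρ → ∃ Ω : Submodule K V, (Ω : Set V) = {x : V | w x ≤ ρ}) ∧
    ∃ b : Module.Basis (Fin n) K V,
      (∀ ρ : ℝ, w 0 ≤ ρ →
        (Finset.univ.filter fun k : Fin n => w (b k) ≤ ρ).card =
          Module.finrank K (Submodule.span K {x : V | w x ≤ ρ})) ∧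
      ∀ b' : Module.Basis (Fin n) K V, ∑ k, w (b k) ≤ ∑ k, w (b' k) := by
  have hna : IsNonarchimedean w := hadd
  obtain ⟨b, hb⟩ := hna.exists_basis_span_setOf_le_eq hsmul hrank
  have profile (ρ : ℝ) : #{k | w (b k) ≤ ρ} = finrank K (span K {x | w x ≤ ρ}) := by
    rw [hb, b.linearIndependent.finrank_span_image_setOf]
  refine ⟨fun ρ hρ => ⟨hna.sublevel hsmul ρ hρ, rfl⟩, b, fun ρ _ => profile ρ, fun b' => ?_⟩
  refine sum_le_sum_of_card_filter_le fun ρ => ?_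
  rw [profile]
  exact b'.linearIndependent.card_filter_le_finrank_span {x | w x ≤ ρ}

/-- The absolute weight filtration: sublevel sets of a non-archimedean weight
function are subspaces, and the associated profile computes the minimum weight
of a basis. -/
theorem stmt1 (K : Type*) [Field K] (V : Type*) [AddCommGroup V] [Module K V]
    [FiniteDimensional K V] (n : ℕ) (hn : 1 ≤ n)
    (hrank : Module.finrank K V = n)
    (w : V → ℝ)
    (hadd : ∀ x y : V, w (x + y) ≤ max (w x) (w y))
    (hsmul : ∀ c : K, c ≠ 0 → ∀ x : V, w (c • x) = w x) :
    (∀ ρ : ℝ, w 0 ≤ ρ → ∃ Ω : Submodule K V, (Ω : Set V) = {x : V | w x ≤ ρ}) ∧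
    ∃ b : Module.Basis (Fin n) K V,
      (∀ ρ : ℝ, w 0 ≤ ρ →
        (Finset.univ.filter fun k : Fin n => w (b k) ≤ ρ).card =
          Module.finrank K (Submodule.span K {x : V | w x ≤ ρ})) ∧
      ∀ b' : Module.Basis (Fin n) K V, ∑ k, w (b k) ≤ ∑ k, w (b' k) :=
  stmt1_general K V n hrank w hadd hsmul
end

section
/- Let K be a field, W a finite-dimensional K-vector space with a basis (e_i)_{i ∈ ι} indexed by a finite set ι, and ω : ι → ℝ a weight function on the basis indices. Let φ : W → U be a surjective K-linear map onto a finite-dimensional K-vector space U of dimension P ≥ 1. For a nonzero u ∈ U, define wt(u) := min over nonzero p ∈ W with φ(p) = u of max_{i ∈ supp(p)} ω_i, where supp(p) ⊆ ι is the set of indices at which the coordinate of p in the basis (e_i) is nonzero (this minimum exists since only finitely many values max_{i ∈ supp(p)} ω_i occur). Then for every basis q_1, …, q_P of U there exists a subset S ⊆ ι such that (φ(e_i))_{i ∈ S} is a basis of U and ∑_{i ∈ S} ω_i ≤ ∑_{k=1}^{P} wt(q_k). -/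
/-!
Greedy exchange: order the given basis `q₁, …, q_P` by weight. Each `q_k` lies in the span of the
images `φ(e_i)` with `ω_i ≤ wt(q_k)`, so once `r` images have been chosen, the `r + 1` lightest
`q_k` cannot all lie in their span; hence some image of weight at most `wt(q_{r+1})` is
independent of the chosen ones and can be added. After `P` steps the chosen images form a basis.
-/

open Finset Submodule Module

section Greedy

variable {K U ι κ M : Type*} [DivisionRing K] [AddCommGroup U] [Module K U]

theorem exists_notMem_span_image_of_card_lt {f : ι → U} {A : Set ι} {S : Finset ι}
    {v : κ → U} {T : Finset κ} (hv : LinearIndepOn K v (T : Set κ))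
    (hvA : ∀ k ∈ T, v k ∈ span K (f '' A)) (hcard : #S < #T) :
    ∃ i ∈ A, f i ∉ span K (f '' (S : Set ι)) := by
  classical
  by_contra! hA
  rw [← coe_image] at hA
  have hvS : span K (v '' T) ≤ span K (S.image f : Set U) := by
    rw [span_le]
    rintro _ ⟨k, hk, rfl⟩
    exact span_le.mpr (by rintro _ ⟨i, hi, rfl⟩; exact hA i hi) (hvA k hk)
  have hT : finrank K (span K (v '' T)) = #T := by
    rw [Set.image_eq_range, finrank_span_eq_card hv]
    simp
  have hS : finrank K (span K (S.image f : Set U)) ≤ #S :=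
    (finrank_span_finset_le_card _).trans card_image_le
  have := Submodule.finrank_mono hvS
  omega

theorem exists_linearIndepOn_card_eq_sum_le [AddCommMonoid M] [LinearOrder M]
    [IsOrderedAddMonoid M] (f : ι → U) (ω : ι → M) {v : κ → U} (c : κ → M) (T : Finset κ)
    (hv : LinearIndepOn K v (T : Set κ)) (hvc : ∀ k ∈ T, v k ∈ span K (f '' {i | ω i ≤ c k})) :
    ∃ S : Finset ι, #S = #T ∧ LinearIndepOn K f (S : Set ι) ∧ ∑ i ∈ S, ω i ≤ ∑ k ∈ T, c k := by
  classical
  induction T using Finset.induction_on_max_value c with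
  | empty => exact ⟨∅, rfl, by simp, by simp⟩
  | insert a T haT hmax ih =>
    obtain ⟨S, hcard, hS, hsum⟩ :=
      ih (hv.mono (by simp)) fun k hk => hvc k (mem_insert_of_mem hk)
    have hvA : ∀ k ∈ insert a T, v k ∈ span K (f '' {i | ω i ≤ c a}) := by
      intro k hk
      refine span_mono (Set.image_mono fun i (hi : ω i ≤ c k) => ?_) (hvc k hk)
      rcases mem_insert.mp hk with rfl | hk
      exacts [hi, hi.trans (hmax k hk)]
    obtain ⟨i, hi, hiS⟩ := exists_notMem_span_image_of_card_lt (by simpa using hv) hvA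
      (by rw [card_insert_of_notMem haT, hcard]; omega)
    have hiS' : i ∉ S := fun h => hiS (subset_span ⟨i, h, rfl⟩)
    refine ⟨insert i S, ?_, ?_, ?_⟩
    · rw [card_insert_of_notMem hiS', card_insert_of_notMem haT, hcard]
    · simpa only [coe_insert] using hS.insert hiS
    · rw [sum_insert hiS', sum_insert haT]
      exact add_le_add hi hsum

end Greedy

theorem Module.Basis.map_mem_span_image_repr_support {K W U ι : Type*} [Semiring K]
    [AddCommMonoid W] [Module K W] [AddCommMonoid U] [Module K U] (e : Basis ι K W)
    (φ : W →ₗ[K] U) (p : W) : φ p ∈ span K ((φ ∘ e) '' (e.repr p).support) := by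
  rw [Set.image_comp, ← map_span]
  exact mem_map_of_mem (e.mem_span_repr_support p)

theorem stmt4_general {K W U ι : Type*} [Field K] [AddCommGroup W] [Module K W]
    [AddCommGroup U] [Module K U]
    (e : Module.Basis ι K W) (ω : ι → ℝ)
    (φ : W →ₗ[K] U)
    (P : ℕ)
    (wt : U → ℝ)
    (hwt : ∀ u : U, u ≠ 0 →
      IsLeast {t : ℝ | ∃ p : W, p ≠ 0 ∧ φ p = u ∧
        ∃ hne : ((e.repr p).support).Nonempty,
          t = ((e.repr p).support).sup' hne ω} (wt u))
    (q : Module.Basis (Fin P) K U) :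
    ∃ S : Finset ι, ∃ bU : Module.Basis {i // i ∈ S} K U,
      (∀ i : {i // i ∈ S}, bU i = φ (e (i : ι))) ∧
      ∑ i ∈ S, ω i ≤ ∑ k, wt (q k) := by
  have : FiniteDimensional K U := .of_basis q
  have hq : ∀ k ∈ univ, q k ∈ span K ((φ ∘ e) '' {i | ω i ≤ wt (q k)}) := by
    intro k _
    obtain ⟨p, -, hpq, hne, hwtp⟩ := (hwt (q k) (q.ne_zero k)).1
    rw [hwtp, ← hpq]
    exact span_mono (Set.image_mono fun i hi => le_sup' ω hi)
      (e.map_mem_span_image_repr_support φ p)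
  obtain ⟨S, hcard, hS, hsum⟩ := exists_linearIndepOn_card_eq_sum_le (φ ∘ e) ω
    (fun k => wt (q k)) univ (q.linearIndependent.linearIndepOn _) hq
  refine ⟨S, basisOfLinearIndependentOfCardEqFinrank' _ hS ?_, fun i => ?_, hsum⟩
  · simp [hcard, finrank_eq_card_basis q]
  · simp

/-- The curve basis lemma: given any basis of the target of a surjection,
there is a set of images of weighted basis vectors forming a basis of the
target whose total weight is at most the total weight of the given basis. -/
theorem stmt4 {K W U ι : Type*} [Field K] [AddCommGroup W] [Module K W]
    [AddCommGroup U] [Module K U] [Fintype ι]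
    (e : Module.Basis ι K W) (ω : ι → ℝ)
    (φ : W →ₗ[K] U) (hφ : Function.Surjective φ)
    (P : ℕ) (hP : 1 ≤ P) (hU : Module.finrank K U = P)
    (wt : U → ℝ)
    (hwt : ∀ u : U, u ≠ 0 →
      IsLeast {t : ℝ | ∃ p : W, p ≠ 0 ∧ φ p = u ∧
        ∃ hne : ((e.repr p).support).Nonempty,
          t = ((e.repr p).support).sup' hne ω} (wt u))
    (q : Module.Basis (Fin P) K U) :
    ∃ S : Finset ι, ∃ bU : Module.Basis {i // i ∈ S} K U,
      (∀ i : {i // i ∈ S}, bU i = φ (e (i : ι))) ∧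
      ∑ i ∈ S, ω i ≤ ∑ k, wt (q k) :=
  stmt4_general e ω φ P wt hwt q
end

section
/- With the combinatorial data and notation of the context, the following inequality holds (the paper's Lemma 'creep'): L ≤ ∑_{j=0}^{N̄} Z_j · r_j. -/
/-!
Abel summation. Writing `r a = ∑_{a ≤ j < N̄} (r j - r (j + 1))` with nonnegative increments turns
both sides into sums `∑_j (coefficient) * (r j - r (j + 1))`. On the left the coefficient at `j` is,
for each `i`, a partial sum of jump weights; with `j(i,m) ≤ j < j(i,m+1)` it telescopes to
`β_i + (c_{j(i,m+1),i} + c_{j(i,m),i} - c_{j(i,0),i}) / 2`. Since `c_{·,i}` is constant on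
`[j(i,m)+1, j(i,m+1)]`, integer valued and jumps at `j(i,m)`, and `β_i ≤ 1/2`, this is at most
`c_{j+1,i}`. On the right the coefficient is `∑_{τ ≤ j} Z_τ`, which is `∑ z` or `2 ∑ z - (N - g)`
and therefore dominates `∑_i c_{j+1,i}` by the Riemann–Roch and Clifford bounds.
-/

open Finset

theorem sum_mul_comp_eq_sum_by_parts {ι R : Type*} [CommRing R] (s : Finset ι) (w : ι → R)
    (p : ι → ℕ) (r : ℕ → R) {n : ℕ} (hp : ∀ k ∈ s, p k ≤ n) (hr : r n = 0) :
    ∑ k ∈ s, w k * r (p k) =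
      ∑ j ∈ range n, (∑ k ∈ s with p k ≤ j, w k) * (r j - r (j + 1)) := by
  have htel : ∀ a ≤ n, r a = ∑ j ∈ range n, if a ≤ j then r j - r (j + 1) else 0 := by
    intro a ha
    have hIco : {j ∈ range n | a ≤ j} = Ico a n := by ext; simp [and_comm]
    rw [← sum_filter, hIco, ← neg_inj, ← sum_neg_distrib]
    simp_rw [neg_sub]
    rw [sum_Ico_sub (fun j => r j) ha, hr, zero_sub]
  calc ∑ k ∈ s, w k * r (p k)
      = ∑ k ∈ s, ∑ j ∈ range n, if p k ≤ j then w k * (r j - r (j + 1)) else 0 := by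
        refine sum_congr rfl fun k hk => ?_
        simp_rw [htel (p k) (hp k hk), mul_sum, mul_ite, mul_zero]
    _ = _ := by
        rw [sum_comm]
        simp_rw [sum_filter, sum_mul, ite_mul, zero_mul]

theorem sum_range_mul_eq_sum_by_parts {R : Type*} [CommRing R] (b r : ℕ → R) {n : ℕ}
    (hr : r n = 0) :
    ∑ j ∈ range (n + 1), b j * r j =
      ∑ j ∈ range n, (∑ τ ∈ range (j + 1), b τ) * (r j - r (j + 1)) := by
  refine (sum_mul_comp_eq_sum_by_parts (range (n + 1)) b id r
    (fun k hk => Nat.lt_succ_iff.1 (mem_range.1 hk)) hr).trans (sum_congr rfl fun j hj => ?_)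
  congr 2
  ext τ
  simp only [mem_filter, mem_range, id]
  have := mem_range.1 hj
  omega

/-- With `a ℓ = c_{j(i,ℓ),i}`, the coefficient of `r_{j(i,ℓ)}` in `L`. -/
noncomputable def jumpWeight (a : ℕ → ℝ) (β : ℝ) : ℕ → ℝ
  | 0 => 1 / 2 * a 1 + β
  | ℓ + 1 => 1 / 2 * (a (ℓ + 2) - a ℓ)

theorem sum_range_succ_jumpWeight (a : ℕ → ℝ) (β : ℝ) (m : ℕ) :
    ∑ ℓ ∈ range (m + 1), jumpWeight a β ℓ = β + 1 / 2 * (a (m + 1) + a m - a 0) := by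
  induction m with
  | zero => simp [jumpWeight]; ring
  | succ m ih => rw [sum_range_succ, ih, jumpWeight]; ring

theorem sum_range_jumpWeight_mul (a x : ℕ → ℝ) (β : ℝ) {K : ℕ} (hK : 1 ≤ K) :
    (1 / 2 * a 1 + β) * x 0 + ∑ ℓ ∈ Ico 1 K, 1 / 2 * (a (ℓ + 1) - a (ℓ - 1)) * x ℓ =
      ∑ ℓ ∈ range K, jumpWeight a β ℓ * x ℓ := by
  obtain ⟨k, rfl⟩ := Nat.exists_eq_add_of_le' hK
  rw [sum_range_succ', sum_Ico_eq_sum_range, add_tsub_cancel_right, add_comm]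
  simp [jumpWeight, add_comm 1]

def IsJumpEnumeration (a : ℕ → ℕ) (n K : ℕ) (p : ℕ → ℕ) : Prop :=
  1 ≤ K ∧ p K = n ∧ (∀ ℓ ℓ', ℓ < ℓ' → ℓ' < K → p ℓ < p ℓ') ∧
    (∀ ℓ < K, p ℓ < n ∧ a (p ℓ) < a (p ℓ + 1)) ∧
    (∀ j < n, a j < a (j + 1) → ∃ ℓ < K, p ℓ = j)

namespace IsJumpEnumeration

variable {a : ℕ → ℕ} {n K : ℕ} {p : ℕ → ℕ}

theorem strictMonoOn (h : IsJumpEnumeration a n K p) : StrictMonoOn p (Set.Iic K) := by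
  intro ℓ _ ℓ' hℓ' hlt
  rcases (Set.mem_Iic.1 hℓ').lt_or_eq with hℓ'K | rfl
  · exact h.2.2.1 ℓ ℓ' hlt hℓ'K
  · exact h.2.1 ▸ (h.2.2.2.1 ℓ hlt).1

theorem le (h : IsJumpEnumeration a n K p) {ℓ : ℕ} (hℓ : ℓ ≤ K) : p ℓ ≤ n :=
  h.2.1 ▸ h.strictMonoOn.monotoneOn hℓ (Set.mem_Iic.2 le_rfl) hℓ

theorem exists_bracket (h : IsJumpEnumeration a n K p) {j : ℕ} (h0 : p 0 ≤ j) (hj : j < n) :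
    ∃ m < K, p m ≤ j ∧ j < p (m + 1) := by
  classical
  have hex : ∃ ℓ, j < p ℓ := ⟨K, h.2.1 ▸ hj⟩
  have hK : Nat.find hex ≤ K := Nat.find_min' hex (h.2.1 ▸ hj)
  have hpos : Nat.find hex ≠ 0 := fun h' => (h' ▸ Nat.find_spec hex).not_ge h0
  refine ⟨Nat.find hex - 1, by omega, not_lt.1 (Nat.find_min hex (by omega)), ?_⟩
  rw [Nat.sub_add_cancel (Nat.one_le_iff_ne_zero.2 hpos)]
  exact Nat.find_spec hex

theorem filter_range_le_eq (h : IsJumpEnumeration a n K p) {m j : ℕ} (hm : m < K)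
    (hmj : p m ≤ j) (hjm : j < p (m + 1)) : {ℓ ∈ range K | p ℓ ≤ j} = range (m + 1) := by
  ext ℓ
  simp only [mem_filter, mem_range]
  constructor
  · rintro ⟨hℓK, hℓj⟩
    by_contra! hmℓ
    have := h.strictMonoOn.monotoneOn (Set.mem_Iic.2 (by omega)) (Set.mem_Iic.2 hℓK.le) hmℓ
    omega
  · intro hℓm
    exact ⟨by omega, (h.strictMonoOn.monotoneOn (Set.mem_Iic.2 (by omega))
      (Set.mem_Iic.2 hm.le) (by omega)).trans hmj⟩

theorem apply_le_of_bracket (h : IsJumpEnumeration a n K p) {m j : ℕ} (hm : m < K)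
    (hmj : p m ≤ j) (hjm : j < p (m + 1)) : a (p (m + 1)) ≤ a (j + 1) := by
  -- a jump at `t` would be some `p ℓ` strictly between `p m` and `p (m + 1)`
  have hflat : AntitoneOn a (Set.Icc (j + 1) (p (m + 1))) := by
    refine antitoneOn_of_add_one_le Set.ordConnected_Icc fun t _ ht ht' => not_lt.1 fun hjump => ?_
    obtain ⟨hjt, -⟩ := ht
    obtain ⟨-, ht'⟩ := ht'
    obtain ⟨ℓ, hℓK, rfl⟩ := h.2.2.2.2 t (by have := h.le (show m + 1 ≤ K by omega); omega) hjump
    have hmℓ := (h.strictMonoOn.lt_iff_lt (Set.mem_Iic.2 hm.le) (Set.mem_Iic.2 hℓK.le)).1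
      (by omega)
    have hℓm := (h.strictMonoOn.lt_iff_lt (Set.mem_Iic.2 hℓK.le)
      (Set.mem_Iic.2 (show m + 1 ≤ K by omega))).1 (by omega)
    omega
  exact hflat (Set.left_mem_Icc.2 hjm) (Set.right_mem_Icc.2 hjm) hjm

theorem sum_filter_jumpWeight_le (h : IsJumpEnumeration a n K p)
    (ha : ∀ t < n, a t ≤ a (t + 1)) {β : ℝ} (hβ : β ≤ 1 / 2) {j : ℕ} (hj : j < n) :
    ∑ ℓ ∈ range K with p ℓ ≤ j, jumpWeight (fun ℓ => (a (p ℓ) : ℝ)) β ℓ ≤ a (j + 1) := by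
  by_cases h0 : p 0 ≤ j
  swap
  · have hnone : ∀ ℓ ∈ range K, ¬p ℓ ≤ j := fun ℓ hℓ hℓj => h0 <|
      (h.strictMonoOn.monotoneOn (Set.mem_Iic.2 (Nat.zero_le _))
        (Set.mem_Iic.2 (mem_range.1 hℓ).le) (Nat.zero_le _)).trans hℓj
    rw [filter_false_of_mem hnone, sum_empty]
    positivity
  obtain ⟨m, hm, hmj, hjm⟩ := h.exists_bracket h0 hj
  have hmono : MonotoneOn a (Set.Iic n) :=
    monotoneOn_of_le_add_one Set.ordConnected_Iic fun t _ _ ht => ha t ht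
  have hjump : (a (p m) : ℝ) + 1 ≤ a (j + 1) := by
    exact_mod_cast (h.2.2.2.1 m hm).2.trans_le
      (hmono (Set.mem_Iic.2 (h.2.2.2.1 m hm).1) (Set.mem_Iic.2 hj) (by omega))
  have hflat : (a (p (m + 1)) : ℝ) ≤ a (j + 1) := by
    exact_mod_cast h.apply_le_of_bracket hm hmj hjm
  rw [h.filter_range_le_eq hm hmj hjm, sum_range_succ_jumpWeight]
  linarith [(Nat.cast_nonneg (a (p 0)) : (0 : ℝ) ≤ a (p 0))]


theorem weightedSum_eq_sum_by_parts (h : IsJumpEnumeration a n K p) (β : ℝ) {r : ℕ → ℝ}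
    (hr : r n = 0) :
    (1 / 2 * (a (p 1) : ℝ) + β) * r (p 0) +
        ∑ ℓ ∈ Ico 1 K, 1 / 2 * ((a (p (ℓ + 1)) : ℝ) - a (p (ℓ - 1))) * r (p ℓ) =
      ∑ j ∈ range n, (∑ ℓ ∈ range K with p ℓ ≤ j, jumpWeight (fun ℓ => (a (p ℓ) : ℝ)) β ℓ) *
        (r j - r (j + 1)) := by
  rw [sum_range_jumpWeight_mul (fun ℓ => (a (p ℓ) : ℝ)) (fun ℓ => r (p ℓ)) β h.1]
  exact sum_mul_comp_eq_sum_by_parts _ _ p r (fun ℓ hℓ => h.le (mem_range.1 hℓ).le) hr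

end IsJumpEnumeration

/-- The paper's `Z_j`, for `D = N - g`. -/
noncomputable def cliffordWeight (z : ℕ → ℕ) (jRR : ℕ) (D : ℝ) (j : ℕ) : ℝ :=
  if j < jRR then (z j : ℝ)
  else if j = jRR then (z j : ℝ) + ((∑ τ ∈ range (jRR + 1), (z τ : ℝ)) - D)
  else 2 * (z j : ℝ)

section cliffordWeight

variable {z : ℕ → ℕ} {jRR : ℕ} {D : ℝ}

theorem sum_range_cliffordWeight_of_le {j : ℕ} (hj : j ≤ jRR) :
    ∑ τ ∈ range j, cliffordWeight z jRR D τ = ∑ τ ∈ range j, (z τ : ℝ) :=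
  sum_congr rfl fun _ hτ => if_pos ((mem_range.1 hτ).trans_le hj)

theorem sum_range_cliffordWeight_of_lt {j : ℕ} (hj : jRR < j) :
    ∑ τ ∈ range j, cliffordWeight z jRR D τ = 2 * ∑ τ ∈ range j, (z τ : ℝ) - D := by
  induction j, hj using Nat.le_induction with
  | base =>
    rw [sum_range_succ, sum_range_cliffordWeight_of_le le_rfl, cliffordWeight,
      if_neg (lt_irrefl _), if_pos rfl, sum_range_succ]
    ring
  | succ j hj ih =>
    rw [sum_range_succ, ih, cliffordWeight, if_neg (by omega), if_neg (by omega),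
      sum_range_succ]
    ring

theorem cast_le_sum_range_cliffordWeight {C : ℕ → ℕ} {n N g : ℕ}
    (hRR : ∀ j, 1 ≤ j → j ≤ n → ∑ τ ∈ range j, z τ ≤ N - g → C j ≤ ∑ τ ∈ range j, z τ)
    (hCliff : ∀ j, 1 ≤ j → j ≤ n → N - g < ∑ τ ∈ range j, z τ →
      (C j : ℤ) ≤ 2 * ∑ τ ∈ range j, (z τ : ℤ) - ((N : ℤ) - g))
    (hjRR : ∑ τ ∈ range jRR, z τ ≤ N - g)
    (hjRR_max : ∀ j ≤ n, ∑ τ ∈ range j, z τ ≤ N - g → j ≤ jRR)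
    {j : ℕ} (hj : 1 ≤ j) (hjn : j ≤ n) :
    (C j : ℝ) ≤ ∑ τ ∈ range j, cliffordWeight z jRR ((N : ℝ) - g) τ := by
  rcases le_or_gt j jRR with hle | hlt
  · rw [sum_range_cliffordWeight_of_le hle]
    exact_mod_cast hRR j hj hjn ((sum_le_sum_of_subset (range_subset_range.2 hle)).trans hjRR)
  · rw [sum_range_cliffordWeight_of_lt hlt]
    exact_mod_cast hCliff j hj hjn (not_le.1 fun h' => (hjRR_max j hjn h').not_gt hlt)

end cliffordWeight

theorem stmt7_general (Nbar q g N : ℕ)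
    (z : ℕ → ℕ)
    (r : ℕ → ℝ) (hrdec : ∀ j < Nbar, r (j + 1) < r j) (hrN : r Nbar = 0)
    (c : ℕ → Fin q → ℕ)
    (hcmono : ∀ j < Nbar, ∀ i : Fin q, c j i ≤ c (j + 1) i)
    (β : Fin q → ℝ) (hβh : ∀ i : Fin q, β i ≤ 1 / 2)
    (hRR : ∀ j, 1 ≤ j → j ≤ Nbar →
      ∑ τ ∈ Finset.range j, z τ ≤ N - g →
      ∑ i : Fin q, c j i ≤ ∑ τ ∈ Finset.range j, z τ)
    (hCliff : ∀ j, 1 ≤ j → j ≤ Nbar →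
      N - g < ∑ τ ∈ Finset.range j, z τ →
      ((∑ i : Fin q, c j i : ℕ) : ℤ) ≤
        2 * (∑ τ ∈ Finset.range j, (z τ : ℤ)) - ((N : ℤ) - (g : ℤ)))
    (jRR : ℕ)
    (hjRR2 : ∑ τ ∈ Finset.range jRR, z τ ≤ N - g)
    (hjRR3 : ∀ j ≤ Nbar, ∑ τ ∈ Finset.range j, z τ ≤ N - g → j ≤ jRR)
    (K : Fin q → ℕ) (jf : Fin q → ℕ → ℕ)
    (henum : ∀ i : Fin q, 0 < c Nbar i →
      1 ≤ K i ∧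
      jf i (K i) = Nbar ∧
      (∀ ℓ ℓ', ℓ < ℓ' → ℓ' < K i → jf i ℓ < jf i ℓ') ∧
      (∀ ℓ < K i, jf i ℓ < Nbar ∧ c (jf i ℓ) i < c (jf i ℓ + 1) i) ∧
      (∀ j < Nbar, c j i < c (j + 1) i → ∃ ℓ < K i, jf i ℓ = j)) :
    (∑ i ∈ Finset.univ.filter (fun i : Fin q => 0 < c Nbar i),
      ((1 / 2 * (c (jf i 1) i : ℝ) + β i) * r (jf i 0) +
        ∑ ℓ ∈ Finset.Ico 1 (K i),
          1 / 2 * ((c (jf i (ℓ + 1)) i : ℝ) - (c (jf i (ℓ - 1)) i : ℝ)) * r (jf i ℓ)))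
    ≤ ∑ j ∈ Finset.range (Nbar + 1),
        (if j < jRR then (z j : ℝ)
         else if j = jRR then
           (z j : ℝ) + ((∑ τ ∈ Finset.range (jRR + 1), (z τ : ℝ)) - ((N : ℝ) - (g : ℝ)))
         else 2 * (z j : ℝ)) * r j := by
  set F := univ.filter fun i : Fin q => 0 < c Nbar i
  have hjumps (i : Fin q) (hi : i ∈ F) : IsJumpEnumeration (c · i) Nbar (K i) (jf i) :=
    henum i (mem_filter.1 hi).2
  set P : Fin q → ℕ → ℝ := fun i j =>
    ∑ ℓ ∈ range (K i) with jf i ℓ ≤ j, jumpWeight (fun ℓ => (c (jf i ℓ) i : ℝ)) (β i) ℓ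
  have hP (j : ℕ) (hj : j < Nbar) :
      ∑ i ∈ F, P i j ≤ ∑ τ ∈ range (j + 1), cliffordWeight z jRR ((N : ℝ) - g) τ :=
    calc ∑ i ∈ F, P i j ≤ ∑ i ∈ F, (c (j + 1) i : ℝ) := sum_le_sum fun i hi =>
          (hjumps i hi).sum_filter_jumpWeight_le (fun t ht => hcmono t ht i) (hβh i) hj
      _ ≤ ∑ i, (c (j + 1) i : ℝ) := sum_le_univ_sum_of_nonneg fun _ => Nat.cast_nonneg _
      _ = ((∑ i, c (j + 1) i : ℕ) : ℝ) := by push_cast; rfl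
      _ ≤ _ := cast_le_sum_range_cliffordWeight (C := fun j => ∑ i, c j i) hRR hCliff hjRR2
          hjRR3 (Nat.succ_pos j) hj
  calc _ = ∑ i ∈ F, ∑ j ∈ range Nbar, P i j * (r j - r (j + 1)) := sum_congr rfl fun i hi =>
          (hjumps i hi).weightedSum_eq_sum_by_parts (β i) hrN
    _ = ∑ j ∈ range Nbar, (∑ i ∈ F, P i j) * (r j - r (j + 1)) := by
          rw [sum_comm]; simp_rw [sum_mul]
    _ ≤ ∑ j ∈ range Nbar, (∑ τ ∈ range (j + 1), cliffordWeight z jRR ((N : ℝ) - g) τ) *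
          (r j - r (j + 1)) := sum_le_sum fun j hj => mul_le_mul_of_nonneg_right
            (hP j (mem_range.1 hj)) (sub_nonneg.2 (hrdec j (mem_range.1 hj)).le)
    _ = _ := (sum_range_mul_eq_sum_by_parts _ r hrN).symm

/-- The paper's Lemma `creep`: the weighted sum of jump contributions is
bounded by `∑ Z_j r_j`. -/
theorem stmt7 (Nbar q g N : ℕ) (hNbar : 1 ≤ Nbar) (hq : 1 ≤ q) (hgN : g ≤ N)
    (z : ℕ → ℕ) (hz : ∀ j ≤ Nbar, 1 ≤ z j)
    (r : ℕ → ℝ) (hrdec : ∀ j < Nbar, r (j + 1) < r j) (hrN : r Nbar = 0)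
    (c : ℕ → Fin q → ℕ)
    (hc0 : ∀ i : Fin q, c 0 i = 0)
    (hcmono : ∀ j < Nbar, ∀ i : Fin q, c j i ≤ c (j + 1) i)
    (β : Fin q → ℝ) (hβ0 : ∀ i : Fin q, 0 ≤ β i) (hβh : ∀ i : Fin q, β i ≤ 1 / 2)
    (hRR : ∀ j, 1 ≤ j → j ≤ Nbar →
      ∑ τ ∈ Finset.range j, z τ ≤ N - g →
      ∑ i : Fin q, c j i ≤ ∑ τ ∈ Finset.range j, z τ)
    (hCliff : ∀ j, 1 ≤ j → j ≤ Nbar →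
      N - g < ∑ τ ∈ Finset.range j, z τ →
      ((∑ i : Fin q, c j i : ℕ) : ℤ) ≤
        2 * (∑ τ ∈ Finset.range j, (z τ : ℤ)) - ((N : ℤ) - (g : ℤ)))
    (jRR : ℕ) (hjRR1 : jRR ≤ Nbar)
    (hjRR2 : ∑ τ ∈ Finset.range jRR, z τ ≤ N - g)
    (hjRR3 : ∀ j ≤ Nbar, ∑ τ ∈ Finset.range j, z τ ≤ N - g → j ≤ jRR)
    (K : Fin q → ℕ) (jf : Fin q → ℕ → ℕ)
    (henum : ∀ i : Fin q, 0 < c Nbar i →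
      1 ≤ K i ∧
      jf i (K i) = Nbar ∧
      (∀ ℓ ℓ', ℓ < ℓ' → ℓ' < K i → jf i ℓ < jf i ℓ') ∧
      (∀ ℓ < K i, jf i ℓ < Nbar ∧ c (jf i ℓ) i < c (jf i ℓ + 1) i) ∧
      (∀ j < Nbar, c j i < c (j + 1) i → ∃ ℓ < K i, jf i ℓ = j)) :
    (∑ i ∈ Finset.univ.filter (fun i : Fin q => 0 < c Nbar i),
      ((1 / 2 * (c (jf i 1) i : ℝ) + β i) * r (jf i 0) +
        ∑ ℓ ∈ Finset.Ico 1 (K i),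
          1 / 2 * ((c (jf i (ℓ + 1)) i : ℝ) - (c (jf i (ℓ - 1)) i : ℝ)) * r (jf i ℓ)))
    ≤ ∑ j ∈ Finset.range (Nbar + 1),
        (if j < jRR then (z j : ℝ)
         else if j = jRR then
           (z j : ℝ) + ((∑ τ ∈ Finset.range (jRR + 1), (z τ : ℝ)) - ((N : ℝ) - (g : ℝ)))
         else 2 * (z j : ℝ)) * r j :=
  stmt7_general Nbar q g N z r hrdec hrN c hcmono β hβh hRR hCliff jRR hjRR2 hjRR3 K jf henum
end

section
/- Let M ≥ 1 be an integer and let c_0 ≤ c_1 ≤ ⋯ ≤ c_M be natural numbers with c_0 = 0 and c_M ≥ 1. Let j(0) < j(1) < ⋯ < j(K−1) enumerate the set {j ∈ {0,…,M−1} : c_j < c_{j+1}} (so K ≥ 1), with the convention j(K) := M. Then for every real β with 0 ≤ β ≤ 1/2 and every J ∈ {0,…,M−1} with j(0) ≤ J, one has (½·c_{j(1)} + β) + ∑ over ℓ with 1 ≤ ℓ ≤ K−1 and j(ℓ) ≤ J of ½·(c_{j(ℓ+1)} − c_{j(ℓ−1)}) ≤ c_{J+1}. -/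
/-!
Let `m` be the last jump index with `j(m) ≤ J`. The sum then runs over `1 ≤ ℓ ≤ m` and telescopes
to `½ (c_{j(m+1)} + c_{j(m)} - c_{j(1)} - c_{j(0)})`. Since `c` has no jump strictly between `j(m)`
and `j(m+1)`, and `j(m) ≤ J < j(m+1)`, we get `c_{j(m+1)} ≤ c_{J+1}`, while the jump at `j(m)` gives
`c_{j(m)} + 1 ≤ c_{J+1}`; the `+ 1` absorbs `β ≤ ½`.
-/

open Finset

theorem Finset.sum_Ico_sub_two_apart {G : Type*} [AddCommGroup G] (g : ℕ → G) (m : ℕ) :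
    ∑ ℓ ∈ Ico 1 (m + 1), (g (ℓ + 1) - g (ℓ - 1)) = g (m + 1) + g m - g 1 - g 0 := by
  induction m with
  | zero => simp
  | succ m ih =>
    rw [sum_Ico_succ_top (by omega), ih, Nat.add_sub_cancel]
    abel

theorem Nat.exists_le_lt_succ_of_le_of_lt {α : Type*} [LinearOrder α] {f : ℕ → α} {x : α} {K : ℕ}
    (h0 : f 0 ≤ x) (hK : x < f K) : ∃ m < K, f m ≤ x ∧ x < f (m + 1) := by
  induction K with
  | zero => exact absurd hK h0.not_gt
  | succ K ih =>
    by_cases hxK : x < f K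
    · obtain ⟨m, hmK, hm⟩ := ih hxK
      exact ⟨m, by omega, hm⟩
    · exact ⟨K, by omega, not_lt.mp hxK, hK⟩

theorem monotoneOn_Iic_of_le_succ {α : Type*} [Preorder α] {M : ℕ} {c : ℕ → α} (hcmono : ∀ j < M, c j ≤ c (j + 1)) :
    MonotoneOn c (Set.Iic M) :=
  monotoneOn_of_le_succ Set.ordConnected_Iic fun j _ _ hj =>
    hcmono j (by simp only [Order.succ_eq_add_one, Set.mem_Iic] at hj; omega)

theorem le_of_forall_not_lt_succ {α : Type*} [LinearOrder α] {c : ℕ → α} {a b : ℕ} (hab : a ≤ b)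
    (hno : ∀ j, a ≤ j → j < b → ¬ c j < c (j + 1)) : c b ≤ c a := by
  refine antitoneOn_of_succ_le (s := Set.Icc a b) Set.ordConnected_Icc ?_ ⟨le_rfl, hab⟩
    ⟨hab, le_rfl⟩ hab
  intro j _ hj hj'
  simp only [Order.succ_eq_add_one, Set.mem_Icc] at hj hj'
  exact not_lt.mp (hno j hj.1 (by omega))

theorem filter_Ico_apply_le_eq_Ico {α : Type*} [LinearOrder α] {f : ℕ → α} {a K m : ℕ} {x : α}
    (hf : StrictMonoOn f (Set.Iio K)) (hmK : m < K) (hmx : f m ≤ x) (hxm : x < f (m + 1)) :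
    (Ico a K).filter (fun ℓ => f ℓ ≤ x) = Ico a (m + 1) := by
  ext ℓ
  simp only [mem_filter, mem_Ico]
  constructor
  · rintro ⟨⟨haℓ, hℓK⟩, hℓx⟩
    refine ⟨haℓ, Nat.lt_succ_of_le (not_lt.mp fun hmℓ => ?_)⟩
    exact (hxm.trans_le (hf.monotoneOn (show m + 1 < K by omega) hℓK hmℓ)).not_ge hℓx
  · rintro ⟨haℓ, hℓm⟩
    exact ⟨⟨haℓ, by omega⟩, (hf.monotoneOn (show ℓ < K by omega) hmK (by omega)).trans hmx⟩

theorem not_lt_succ_of_between_consecutive {c jf : ℕ → ℕ} {M Kn m j : ℕ}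
    (hjall : ∀ j < M, c j < c (j + 1) → ∃ ℓ < Kn, jf ℓ = j) (hjf : StrictMonoOn jf (Set.Iio Kn))
    (hmK : m < Kn) (hmj : jf m < j) (hjm : j < jf (m + 1)) (hjM : j < M) : ¬ c j < c (j + 1) := by
  intro hjump
  obtain ⟨ℓ, hℓK, rfl⟩ := hjall j hjM hjump
  rcases le_or_gt ℓ m with hℓm | hmℓ
  · exact (hjf.monotoneOn hℓK hmK hℓm).not_gt hmj
  · exact (hjf.monotoneOn (show m + 1 < Kn by omega) hℓK hmℓ).not_gt hjm

theorem stmt8_general (M : ℕ) (c : ℕ → ℕ)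
    (hcmono : ∀ j < M, c j ≤ c (j + 1))
    (Kn : ℕ) (jf : ℕ → ℕ)
    (hjlast : jf Kn = M)
    (hjmono : ∀ ℓ ℓ', ℓ < ℓ' → ℓ' < Kn → jf ℓ < jf ℓ')
    (hjjump : ∀ ℓ < Kn, jf ℓ < M ∧ c (jf ℓ) < c (jf ℓ + 1))
    (hjall : ∀ j < M, c j < c (j + 1) → ∃ ℓ < Kn, jf ℓ = j)
    (β : ℝ) (hβh : β ≤ 1 / 2)
    (J : ℕ) (hJ : J < M) (hJj0 : jf 0 ≤ J) :
    (1 / 2 * (c (jf 1) : ℝ) + β) +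
      ∑ ℓ ∈ (Finset.Ico 1 Kn).filter (fun ℓ => jf ℓ ≤ J),
        1 / 2 * ((c (jf (ℓ + 1)) : ℝ) - (c (jf (ℓ - 1)) : ℝ))
    ≤ (c (J + 1) : ℝ) := by
  have hjf : StrictMonoOn jf (Set.Iio Kn) := fun ℓ _ ℓ' hℓ' h => hjmono ℓ ℓ' h hℓ'
  obtain ⟨m, hmK, hmJ, hJm⟩ := Nat.exists_le_lt_succ_of_le_of_lt (f := jf) hJj0 (hjlast ▸ hJ)
  have hjm1M : jf (m + 1) ≤ M := by
    rcases (Nat.succ_le_of_lt hmK).eq_or_lt with h | h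
    · rw [← hjlast, ← h]
    · exact (hjjump (m + 1) h).1.le
  have hnext : c (jf (m + 1)) ≤ c (J + 1) :=
    le_of_forall_not_lt_succ hJm fun j hJj hj =>
      not_lt_succ_of_between_consecutive hjall hjf hmK (by omega) hj (by omega)
  have hcur : c (jf m) + 1 ≤ c (J + 1) :=
    (hjjump m hmK).2.trans_le
      (monotoneOn_Iic_of_le_succ hcmono (by rw [Set.mem_Iic]; omega) (by rw [Set.mem_Iic]; omega) (by omega))
  rw [filter_Ico_apply_le_eq_Ico hjf hmK hmJ hJm, ← mul_sum,
    sum_Ico_sub_two_apart (fun ℓ => (c (jf ℓ) : ℝ))]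
  have hnext' : (c (jf (m + 1)) : ℝ) ≤ c (J + 1) := by exact_mod_cast hnext
  have hcur' : (c (jf m) : ℝ) + 1 ≤ c (J + 1) := by exact_mod_cast hcur
  have hc0 : (0 : ℝ) ≤ c (jf 0) := Nat.cast_nonneg _
  linarith

/-- The telescoping estimate from the proof of Lemma `creep`: the weighted
contribution of the jumps occurring at rows up to `J` is bounded by the value
of the sequence at row `J + 1`. -/
theorem stmt8 (M : ℕ) (hM : 1 ≤ M) (c : ℕ → ℕ)
    (hcmono : ∀ j < M, c j ≤ c (j + 1)) (hc0 : c 0 = 0) (hcM : 1 ≤ c M)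
    (Kn : ℕ) (jf : ℕ → ℕ)
    (hK : 1 ≤ Kn)
    (hjlast : jf Kn = M)
    (hjmono : ∀ ℓ ℓ', ℓ < ℓ' → ℓ' < Kn → jf ℓ < jf ℓ')
    (hjjump : ∀ ℓ < Kn, jf ℓ < M ∧ c (jf ℓ) < c (jf ℓ + 1))
    (hjall : ∀ j < M, c j < c (j + 1) → ∃ ℓ < Kn, jf ℓ = j)
    (β : ℝ) (hβ0 : 0 ≤ β) (hβh : β ≤ 1 / 2)
    (J : ℕ) (hJ : J < M) (hJj0 : jf 0 ≤ J) :
    (1 / 2 * (c (jf 1) : ℝ) + β) +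
      ∑ ℓ ∈ (Finset.Ico 1 Kn).filter (fun ℓ => jf ℓ ≤ J),
        1 / 2 * ((c (jf (ℓ + 1)) : ℝ) - (c (jf (ℓ - 1)) : ℝ))
    ≤ (c (J + 1) : ℝ) :=
  stmt8_general M c hcmono Kn jf hjlast hjmono hjjump hjall β hβh J hJ hJj0
end

section
/- With the combinatorial data and notation of the context, assume additionally that there is a real number β with 0 ≤ β < 1/2 and β_i ≤ β for every i ∈ {1,…,q}. Set ρ := r_{N̄−1} if z_{N̄} = 1, and ρ := 0 if z_{N̄} > 1. Then (the paper's Lemma 'betterthancreep', part 1): L ≤ ∑_{j=0}^{N̄} Z_j · r_j − (1/2 − β)·ρ. -/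
/-!
Abel summation writes the contribution of the `i`-th point as a sum over the jumps of
`c_{·,i}` against the decrements of `r`, with coefficients `β_i + (c_ℓ + c_{ℓ+1}) / 2`; since
every jump has size at least one, these are at most `c_{ℓ+1} - (1/2 - β)`. Reindexed over all
steps `m < N̄` and summed over `i`, the coefficient of `r_m - r_{m+1}` becomes at most
`∑_i c_{m+1,i} - (1/2 - β)`, and Riemann–Roch and Clifford bound `∑_i c_{m+1,i}` by
`Z_0 + ⋯ + Z_m`. A second Abel summation turns the result into `∑_j Z_j r_j - (1/2 - β) r_0`,
and `ρ ≤ r_0`.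
-/

open Finset

lemma Finset.sum_Ico_sub' (w : ℕ → ℝ) {a b : ℕ} (hab : a ≤ b) :
    ∑ m ∈ Ico a b, (w m - w (m + 1)) = w a - w b := by
  rw [← neg_sub (w b), ← Finset.sum_Ico_sub w hab, ← sum_neg_distrib]
  simp only [neg_sub]

lemma Nat.eq_of_forall_apply_succ_eq {α : Type*} {u : ℕ → α} {a b : ℕ}
    (h : ∀ j, a ≤ j → j < b → u (j + 1) = u j) (hab : a ≤ b) : u b = u a := by
  induction b, hab using Nat.le_induction with
  | base => rfl
  | succ n hn ih => rw [h n hn n.lt_succ_self, ih fun j hj hjn => h j hj (by omega)]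

/-- The paper's enumeration `j(i, 0) < ⋯ < j(i, K_i - 1)` of the jumps of `c_{·,i}`, with
`j(i, K_i) = N̄`. -/
structure IsJumpEnum (u : ℕ → ℕ) (n K : ℕ) (jf : ℕ → ℕ) : Prop where
  last : jf K = n
  lt_of_lt : ∀ ℓ ℓ', ℓ < ℓ' → ℓ' < K → jf ℓ < jf ℓ'
  jump : ∀ ℓ < K, jf ℓ < n ∧ u (jf ℓ) < u (jf ℓ + 1)
  exists_eq_of_jump : ∀ j < n, u j < u (j + 1) → ∃ ℓ < K, jf ℓ = j

namespace IsJumpEnum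

variable {u : ℕ → ℕ} {n K : ℕ} {jf : ℕ → ℕ}

lemma strictMonoOn (h : IsJumpEnum u n K jf) : StrictMonoOn jf (Set.Iic K) := by
  intro ℓ hℓ ℓ' hℓ' hlt
  rcases (Set.mem_Iic.1 hℓ').lt_or_eq with hK | rfl
  · exact h.lt_of_lt ℓ ℓ' hlt hK
  · exact h.last ▸ (h.jump ℓ hlt).1

lemma le_of_le (h : IsJumpEnum u n K jf) {ℓ : ℕ} (hℓ : ℓ ≤ K) : jf ℓ ≤ n :=
  h.last ▸ h.strictMonoOn.monotoneOn hℓ Set.self_mem_Iic hℓ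

lemma apply_eq_zero (h : IsJumpEnum u n K jf) (hu : ∀ j < n, u j ≤ u (j + 1))
    (hu0 : u 0 = 0) {m : ℕ} (hm : m ≤ jf 0) : u m = 0 := by
  refine hu0 ▸ Nat.eq_of_forall_apply_succ_eq (fun j _ hj => ?_) (Nat.zero_le m)
  have hjn : j < n := by have := h.le_of_le (Nat.zero_le K); omega
  refine le_antisymm (not_lt.1 fun hjump => ?_) (hu j hjn)
  obtain ⟨ℓ, hℓK, rfl⟩ := h.exists_eq_of_jump j hjn hjump
  have := h.strictMonoOn.monotoneOn (Set.mem_Iic.2 (Nat.zero_le K)) (Set.mem_Iic.2 hℓK.le)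
    (Nat.zero_le ℓ)
  omega

lemma apply_succ_eq (h : IsJumpEnum u n K jf) (hu : ∀ j < n, u j ≤ u (j + 1)) {ℓ m : ℕ}
    (hℓ : ℓ < K) (hm : jf ℓ ≤ m) (hm' : m < jf (ℓ + 1)) : u (m + 1) = u (jf (ℓ + 1)) := by
  refine (Nat.eq_of_forall_apply_succ_eq (fun j hj hj' => ?_) hm').symm
  have hjn : j < n := by have : jf (ℓ + 1) ≤ n := h.le_of_le hℓ; omega
  refine le_antisymm (not_lt.1 fun hjump => ?_) (hu j hjn)
  obtain ⟨ℓ', hℓ'K, rfl⟩ := h.exists_eq_of_jump j hjn hjump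
  have h1 := (h.strictMonoOn.lt_iff_lt (Set.mem_Iic.2 hℓ.le) (Set.mem_Iic.2 hℓ'K.le)).1
    (by omega)
  have h2 := (h.strictMonoOn.lt_iff_lt (Set.mem_Iic.2 hℓ'K.le) (Set.mem_Iic.2 hℓ)).1 hj'
  omega

lemma succ_le_apply_succ (h : IsJumpEnum u n K jf) (hu : ∀ j < n, u j ≤ u (j + 1)) {ℓ : ℕ}
    (hℓ : ℓ < K) : u (jf ℓ) + 1 ≤ u (jf (ℓ + 1)) :=
  h.apply_succ_eq hu hℓ le_rfl (h.strictMonoOn (Set.mem_Iic.2 hℓ.le) (Set.mem_Iic.2 hℓ)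
    ℓ.lt_succ_self) ▸ (h.jump ℓ hℓ).2

/-- `u (m + 1)` vanishes for `m < jf 0` and is constant on each block `[jf ℓ, jf (ℓ + 1))`. -/
lemma sum_range_eq_sum_blocks (h : IsJumpEnum u n K jf) (hu : ∀ j < n, u j ≤ u (j + 1))
    (hu0 : u 0 = 0) (φ : ℕ → ℝ) (hφ : φ 0 = 0) (w : ℕ → ℝ) :
    ∑ m ∈ range n, φ (u (m + 1)) * (w m - w (m + 1)) =
      ∑ ℓ ∈ range K, φ (u (jf (ℓ + 1))) * (w (jf ℓ) - w (jf (ℓ + 1))) := by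
  suffices ∀ k ≤ K, ∑ m ∈ range (jf k), φ (u (m + 1)) * (w m - w (m + 1)) =
      ∑ ℓ ∈ range k, φ (u (jf (ℓ + 1))) * (w (jf ℓ) - w (jf (ℓ + 1))) by
    simpa only [h.last] using this K le_rfl
  intro k hk
  induction k with
  | zero =>
    refine sum_eq_zero fun m hm => ?_
    rw [h.apply_eq_zero hu hu0 (mem_range.1 hm), hφ, zero_mul]
  | succ k ih =>
    have hjf : jf k ≤ jf (k + 1) := (h.strictMonoOn (Set.mem_Iic.2 (by omega))
      (Set.mem_Iic.2 hk) k.lt_succ_self).le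
    rw [← sum_range_add_sum_Ico _ hjf, ih (by omega), sum_range_succ,
      ← Finset.sum_Ico_sub' w hjf, mul_sum]
    refine congrArg _ (sum_congr rfl fun m hm => ?_)
    rw [mem_Ico] at hm
    rw [h.apply_succ_eq hu hk hm.1 hm.2]

end IsJumpEnum

lemma sum_range_avg_mul_sub_eq (u v : ℕ → ℝ) (b : ℝ) {K : ℕ} (hK : 1 ≤ K) :
    ∑ ℓ ∈ range K, (b + 1 / 2 * (u (ℓ + 1) + u ℓ)) * (v ℓ - v (ℓ + 1)) =
      (1 / 2 * u 1 + b + 1 / 2 * u 0) * v 0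
        + ∑ ℓ ∈ Ico 1 K, 1 / 2 * (u (ℓ + 1) - u (ℓ - 1)) * v ℓ
        - (b + 1 / 2 * (u K + u (K - 1))) * v K := by
  induction K, hK using Nat.le_induction with
  | base => simp only [sum_range_one, Ico_self, sum_empty]; ring
  | succ n hn ih =>
    rw [sum_range_succ, ih, sum_Ico_succ_top hn, Nat.add_sub_cancel]
    ring

def subIfPos (δ : ℝ) (k : ℕ) : ℝ := if 0 < k then k - δ else 0

@[simp]
lemma subIfPos_zero (δ : ℝ) : subIfPos δ 0 = 0 := rfl

lemma subIfPos_of_pos {δ : ℝ} {k : ℕ} (hk : 0 < k) : subIfPos δ k = k - δ := if_pos hk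

lemma subIfPos_le {δ : ℝ} (hδ : 0 ≤ δ) (k : ℕ) : subIfPos δ k ≤ k := by
  unfold subIfPos; split_ifs <;> simp [hδ]

lemma sum_subIfPos_le {ι : Type*} (s : Finset ι) (x : ι → ℕ) {δ S : ℝ} (hδ : 0 ≤ δ)
    (hδS : δ ≤ S) (hx : ∑ i ∈ s, (x i : ℝ) ≤ S) :
    ∑ i ∈ s, subIfPos δ (x i) ≤ S - δ := by
  classical
  by_cases hpos : ∃ i ∈ s, 0 < x i
  · obtain ⟨i₀, hi₀, hxi₀⟩ := hpos
    rw [← add_sum_erase _ _ hi₀] at hx ⊢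
    have := sum_le_sum fun i (_ : i ∈ s.erase i₀) => subIfPos_le hδ (x i)
    rw [subIfPos_of_pos hxi₀]
    linarith
  · push Not at hpos
    rw [sum_eq_zero fun i hi => by rw [Nat.le_zero.1 (hpos i hi), subIfPos_zero]]
    linarith

lemma IsJumpEnum.sum_jumps_le {u : ℕ → ℕ} {n K : ℕ} {jf : ℕ → ℕ} (h : IsJumpEnum u n K jf)
    (hu : ∀ j < n, u j ≤ u (j + 1)) (hu0 : u 0 = 0) (hK : 1 ≤ K) {w : ℕ → ℝ}
    (hw : AntitoneOn w (Set.Iic n)) (hwn : w n = 0) {b δ : ℝ} (hb : b ≤ 1 / 2 - δ) :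
    (1 / 2 * (u (jf 1) : ℝ) + b) * w (jf 0) +
        ∑ ℓ ∈ Ico 1 K, 1 / 2 * ((u (jf (ℓ + 1)) : ℝ) - (u (jf (ℓ - 1)) : ℝ)) * w (jf ℓ)
      ≤ ∑ m ∈ range n, subIfPos δ (u (m + 1)) * (w m - w (m + 1)) := by
  have hsum := sum_range_avg_mul_sub_eq (fun ℓ => (u (jf ℓ) : ℝ)) (fun ℓ => w (jf ℓ)) b hK
  simp only [h.apply_eq_zero hu hu0 le_rfl, h.last, hwn, CharP.cast_eq_zero] at hsum
  rw [h.sum_range_eq_sum_blocks hu hu0 _ (subIfPos_zero δ)]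
  refine le_of_eq_of_le (by linear_combination -hsum) (sum_le_sum fun ℓ hℓ => ?_)
  rw [mem_range] at hℓ
  have hjumpℕ := h.succ_le_apply_succ hu hℓ
  have hjump : (u (jf ℓ) : ℝ) + 1 ≤ u (jf (ℓ + 1)) := by exact_mod_cast hjumpℕ
  have hmem : ∀ {k}, k ≤ K → jf k ∈ Set.Iic n := fun hk => h.le_of_le hk
  have hdw : 0 ≤ w (jf ℓ) - w (jf (ℓ + 1)) := sub_nonneg.2 <| hw (hmem hℓ.le) (hmem hℓ)
    (h.strictMonoOn.monotoneOn (Set.mem_Iic.2 hℓ.le) (Set.mem_Iic.2 hℓ) ℓ.le_succ)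
  rw [subIfPos_of_pos (by omega)]
  exact mul_le_mul_of_nonneg_right (by linarith) hdw

/-- The paper's `Z_j`. -/
def rrCliffordWeight (z : ℕ → ℕ) (N g jRR j : ℕ) : ℝ :=
  if j < jRR then (z j : ℝ)
  else if j = jRR then
    (z j : ℝ) + ((∑ τ ∈ range (jRR + 1), (z τ : ℝ)) - ((N : ℝ) - (g : ℝ)))
  else 2 * (z j : ℝ)

section rrCliffordWeight

variable {z : ℕ → ℕ} {N g jRR : ℕ}

lemma sum_range_rrCliffordWeight_of_le {k : ℕ} (hk : k ≤ jRR) :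
    ∑ τ ∈ range k, rrCliffordWeight z N g jRR τ = ∑ τ ∈ range k, (z τ : ℝ) :=
  sum_congr rfl fun _ hτ => if_pos ((mem_range.1 hτ).trans_le hk)

lemma sum_range_rrCliffordWeight_of_lt {k : ℕ} (hk : jRR < k) :
    ∑ τ ∈ range k, rrCliffordWeight z N g jRR τ =
      2 * ∑ τ ∈ range k, (z τ : ℝ) - ((N : ℝ) - g) := by
  induction k, hk using Nat.le_induction with
  | base =>
    rw [sum_range_succ, sum_range_rrCliffordWeight_of_le le_rfl, sum_range_succ]
    simp only [rrCliffordWeight, lt_irrefl, if_false, if_true, sum_range_succ]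
    ring
  | succ k hk ih =>
    rw [sum_range_succ, ih, sum_range_succ (fun τ => (z τ : ℝ))]
    simp only [rrCliffordWeight, if_neg (show ¬ k < jRR by omega),
      if_neg (show k ≠ jRR by omega)]
    ring

lemma sum_range_rrCliffordWeight (hgN : g ≤ N) (hjRR : ∑ τ ∈ range jRR, z τ ≤ N - g) {k : ℕ}
    (hmax : ∑ τ ∈ range k, z τ ≤ N - g → k ≤ jRR) :
    ∑ τ ∈ range k, rrCliffordWeight z N g jRR τ =
      ∑ τ ∈ range k, (z τ : ℝ) + max 0 (∑ τ ∈ range k, (z τ : ℝ) - ((N : ℝ) - g)) := by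
  have hcast : ((N - g : ℕ) : ℝ) = (N : ℝ) - g := Nat.cast_sub hgN
  by_cases hk : ∑ τ ∈ range k, z τ ≤ N - g
  · have hkℝ : ∑ τ ∈ range k, (z τ : ℝ) ≤ (N : ℝ) - g := by rw [← hcast]; exact_mod_cast hk
    rw [sum_range_rrCliffordWeight_of_le (hmax hk), max_eq_left (by linarith), add_zero]
  · have hkℝ : (N : ℝ) - g < ∑ τ ∈ range k, (z τ : ℝ) := by
      rw [← hcast]; exact_mod_cast not_le.1 hk
    have hlt : jRR < k := not_le.1 fun hle =>
      hk ((sum_le_sum_of_subset (range_subset_range.2 hle)).trans hjRR)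
    rw [sum_range_rrCliffordWeight_of_lt hlt, max_eq_right (by linarith)]
    ring

lemma cast_le_sum_range_rrCliffordWeight (hgN : g ≤ N) (hjRR : ∑ τ ∈ range jRR, z τ ≤ N - g)
    {k s : ℕ} (hmax : ∑ τ ∈ range k, z τ ≤ N - g → k ≤ jRR)
    (hRR : ∑ τ ∈ range k, z τ ≤ N - g → s ≤ ∑ τ ∈ range k, z τ)
    (hCliff : N - g < ∑ τ ∈ range k, z τ →
      (s : ℤ) ≤ 2 * ∑ τ ∈ range k, (z τ : ℤ) - ((N : ℤ) - g)) :
    (s : ℝ) ≤ ∑ τ ∈ range k, rrCliffordWeight z N g jRR τ := by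
  rw [sum_range_rrCliffordWeight hgN hjRR hmax]
  by_cases hk : ∑ τ ∈ range k, z τ ≤ N - g
  · have hs : (s : ℝ) ≤ ∑ τ ∈ range k, (z τ : ℝ) := by exact_mod_cast hRR hk
    linarith [le_max_left 0 (∑ τ ∈ range k, (z τ : ℝ) - ((N : ℝ) - g))]
  · have hs : (s : ℝ) ≤ 2 * ∑ τ ∈ range k, (z τ : ℝ) - ((N : ℝ) - g) := by
      exact_mod_cast hCliff (not_le.1 hk)
    linarith [le_max_right 0 (∑ τ ∈ range k, (z τ : ℝ) - ((N : ℝ) - g))]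

lemma one_le_sum_range_rrCliffordWeight (hgN : g ≤ N) (hjRR : ∑ τ ∈ range jRR, z τ ≤ N - g)
    (hz0 : 1 ≤ z 0) {k : ℕ} (hk : 1 ≤ k) (hmax : ∑ τ ∈ range k, z τ ≤ N - g → k ≤ jRR) :
    1 ≤ ∑ τ ∈ range k, rrCliffordWeight z N g jRR τ := by
  have hz : (1 : ℝ) ≤ ∑ τ ∈ range k, (z τ : ℝ) := by
    exact_mod_cast hz0.trans (single_le_sum (fun τ _ => Nat.zero_le (z τ)) (mem_range.2 hk))
  rw [sum_range_rrCliffordWeight hgN hjRR hmax]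
  linarith [le_max_left 0 (∑ τ ∈ range k, (z τ : ℝ) - ((N : ℝ) - g))]

end rrCliffordWeight

lemma sum_range_partialSum_mul_sub (W r : ℕ → ℝ) (n : ℕ) :
    ∑ m ∈ range n, (∑ τ ∈ range (m + 1), W τ) * (r m - r (m + 1)) =
      ∑ j ∈ range (n + 1), W j * r j - (∑ τ ∈ range (n + 1), W τ) * r n := by
  induction n with
  | zero => simp
  | succ n ih =>
    rw [sum_range_succ, ih, sum_range_succ _ (n + 1), sum_range_succ W (n + 1)]
    ring

lemma sum_range_partialSum_sub_mul_sub (W r : ℕ → ℝ) (δ : ℝ) {n : ℕ} (hrn : r n = 0) :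
    ∑ m ∈ range n, (∑ τ ∈ range (m + 1), W τ - δ) * (r m - r (m + 1)) =
      ∑ j ∈ range (n + 1), W j * r j - δ * r 0 := by
  simp_rw [sub_mul _ δ, sum_sub_distrib, ← mul_sum, sum_range_sub',
    sum_range_partialSum_mul_sub, hrn, mul_zero, sub_zero]

lemma sum_filter_sum_range_subIfPos {ι : Type*} (s : Finset ι) {n : ℕ} (c : ℕ → ι → ℕ)
    (hc : ∀ j < n, ∀ i, c j i ≤ c (j + 1) i) (δ : ℝ) (w : ℕ → ℝ) :
    ∑ i ∈ s.filter (fun i => 0 < c n i), ∑ m ∈ range n, subIfPos δ (c (m + 1) i) * w m =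
      ∑ m ∈ range n, (∑ i ∈ s, subIfPos δ (c (m + 1) i)) * w m := by
  have hvanish : ∀ i ∈ s, ∑ m ∈ range n, subIfPos δ (c (m + 1) i) * w m ≠ 0 → 0 < c n i :=
    fun i _ hne => Nat.pos_of_ne_zero fun h0 => hne <| sum_eq_zero fun m hm => by
      have hcm : c (m + 1) i ≤ c n i := monotoneOn_of_le_succ Set.ordConnected_Iic
        (fun j _ _ hj => hc j (Order.succ_le_iff.1 hj) i) (Set.mem_Iic.2 (mem_range.1 hm))
        Set.self_mem_Iic (mem_range.1 hm)
      rw [h0, Nat.le_zero] at hcm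
      rw [hcm, subIfPos_zero, zero_mul]
  rw [sum_filter_of_ne hvanish, sum_comm]
  simp_rw [sum_mul]

theorem stmt9_general (Nbar q g N : ℕ) (hgN : g ≤ N)
    (z : ℕ → ℕ) (hz : ∀ j ≤ Nbar, 1 ≤ z j)
    (r : ℕ → ℝ) (hrdec : ∀ j < Nbar, r (j + 1) < r j) (hrN : r Nbar = 0)
    (c : ℕ → Fin q → ℕ)
    (hc0 : ∀ i : Fin q, c 0 i = 0)
    (hcmono : ∀ j < Nbar, ∀ i : Fin q, c j i ≤ c (j + 1) i)
    (β : Fin q → ℝ)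
    (hRR : ∀ j, 1 ≤ j → j ≤ Nbar →
      ∑ τ ∈ Finset.range j, z τ ≤ N - g →
      ∑ i : Fin q, c j i ≤ ∑ τ ∈ Finset.range j, z τ)
    (hCliff : ∀ j, 1 ≤ j → j ≤ Nbar →
      N - g < ∑ τ ∈ Finset.range j, z τ →
      ((∑ i : Fin q, c j i : ℕ) : ℤ) ≤
        2 * (∑ τ ∈ Finset.range j, (z τ : ℤ)) - ((N : ℤ) - (g : ℤ)))
    (jRR : ℕ)
    (hjRR2 : ∑ τ ∈ Finset.range jRR, z τ ≤ N - g)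
    (hjRR3 : ∀ j ≤ Nbar, ∑ τ ∈ Finset.range j, z τ ≤ N - g → j ≤ jRR)
    (K : Fin q → ℕ) (jf : Fin q → ℕ → ℕ)
    (henum : ∀ i : Fin q, 0 < c Nbar i →
      1 ≤ K i ∧
      jf i (K i) = Nbar ∧
      (∀ ℓ ℓ', ℓ < ℓ' → ℓ' < K i → jf i ℓ < jf i ℓ') ∧
      (∀ ℓ < K i, jf i ℓ < Nbar ∧ c (jf i ℓ) i < c (jf i ℓ + 1) i) ∧
      (∀ j < Nbar, c j i < c (j + 1) i → ∃ ℓ < K i, jf i ℓ = j))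
    (βb : ℝ) (hβb0 : 0 ≤ βb) (hβblt : βb < 1 / 2)
    (hβle : ∀ i : Fin q, β i ≤ βb) :
    (∑ i ∈ Finset.univ.filter (fun i : Fin q => 0 < c Nbar i),
      ((1 / 2 * (c (jf i 1) i : ℝ) + β i) * r (jf i 0) +
        ∑ ℓ ∈ Finset.Ico 1 (K i),
          1 / 2 * ((c (jf i (ℓ + 1)) i : ℝ) - (c (jf i (ℓ - 1)) i : ℝ)) * r (jf i ℓ)))
    ≤ (∑ j ∈ Finset.range (Nbar + 1),
        (if j < jRR then (z j : ℝ)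
         else if j = jRR then
           (z j : ℝ) + ((∑ τ ∈ Finset.range (jRR + 1), (z τ : ℝ)) - ((N : ℝ) - (g : ℝ)))
         else 2 * (z j : ℝ)) * r j)
      - (1 / 2 - βb) * (if z Nbar = 1 then r (Nbar - 1) else 0) := by
  set δ : ℝ := 1 / 2 - βb with hδ
  set Z := rrCliffordWeight z N g jRR
  have hr : AntitoneOn r (Set.Iic Nbar) := antitoneOn_of_succ_le Set.ordConnected_Iic
    fun j _ _ hj => (hrdec j (Order.succ_le_iff.1 hj)).le
  have hcoeff : ∀ m < Nbar, ∑ i, subIfPos δ (c (m + 1) i) ≤ ∑ τ ∈ range (m + 1), Z τ - δ := by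
    intro m hm
    have hS := one_le_sum_range_rrCliffordWeight hgN hjRR2 (hz 0 (Nat.zero_le _)) m.succ_pos
      (hjRR3 (m + 1) hm)
    have hcS := cast_le_sum_range_rrCliffordWeight hgN hjRR2 (hjRR3 (m + 1) hm)
      (hRR (m + 1) m.succ_pos hm) (hCliff (m + 1) m.succ_pos hm)
    push_cast at hcS
    exact sum_subIfPos_le _ _ (by linarith) (by linarith) hcS
  have hρ : (if z Nbar = 1 then r (Nbar - 1) else 0) ≤ r 0 := by
    split_ifs
    · exact hr (Set.mem_Iic.2 (Nat.zero_le _)) (Set.mem_Iic.2 (Nat.sub_le _ _)) (Nat.zero_le _)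
    · simpa [hrN] using hr (Set.mem_Iic.2 (Nat.zero_le _)) Set.self_mem_Iic (Nat.zero_le Nbar)
  calc
    _ ≤ ∑ i ∈ univ.filter (fun i : Fin q => 0 < c Nbar i),
        ∑ m ∈ range Nbar, subIfPos δ (c (m + 1) i) * (r m - r (m + 1)) := by
      refine sum_le_sum fun i hi => ?_
      obtain ⟨hK, hlast, hlt, hjump, hex⟩ := henum i (mem_filter.1 hi).2
      exact IsJumpEnum.sum_jumps_le ⟨hlast, hlt, hjump, hex⟩ (fun j hj => hcmono j hj i)
        (hc0 i) hK hr hrN (by linarith [hβle i])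
    _ = ∑ m ∈ range Nbar, (∑ i, subIfPos δ (c (m + 1) i)) * (r m - r (m + 1)) :=
      sum_filter_sum_range_subIfPos _ c hcmono δ _
    _ ≤ ∑ m ∈ range Nbar, (∑ τ ∈ range (m + 1), Z τ - δ) * (r m - r (m + 1)) :=
      sum_le_sum fun m hm => mul_le_mul_of_nonneg_right (hcoeff m (mem_range.1 hm))
        (sub_nonneg.2 (hrdec m (mem_range.1 hm)).le)
    _ = ∑ j ∈ range (Nbar + 1), Z j * r j - δ * r 0 := sum_range_partialSum_sub_mul_sub Z r δ hrN
    _ ≤ _ := sub_le_sub_left (mul_le_mul_of_nonneg_left hρ (by linarith)) _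

/-- The paper's Lemma `betterthancreep`, part 1: with all marked-point weights
bounded by some `β < 1/2`, the bound of Lemma `creep` improves by
`(1/2 - β) ρ`. -/
theorem stmt9 (Nbar q g N : ℕ) (hNbar : 1 ≤ Nbar) (hq : 1 ≤ q) (hgN : g ≤ N)
    (z : ℕ → ℕ) (hz : ∀ j ≤ Nbar, 1 ≤ z j)
    (r : ℕ → ℝ) (hrdec : ∀ j < Nbar, r (j + 1) < r j) (hrN : r Nbar = 0)
    (c : ℕ → Fin q → ℕ)
    (hc0 : ∀ i : Fin q, c 0 i = 0)
    (hcmono : ∀ j < Nbar, ∀ i : Fin q, c j i ≤ c (j + 1) i)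
    (β : Fin q → ℝ) (hβ0 : ∀ i : Fin q, 0 ≤ β i) (hβh : ∀ i : Fin q, β i ≤ 1 / 2)
    (hRR : ∀ j, 1 ≤ j → j ≤ Nbar →
      ∑ τ ∈ Finset.range j, z τ ≤ N - g →
      ∑ i : Fin q, c j i ≤ ∑ τ ∈ Finset.range j, z τ)
    (hCliff : ∀ j, 1 ≤ j → j ≤ Nbar →
      N - g < ∑ τ ∈ Finset.range j, z τ →
      ((∑ i : Fin q, c j i : ℕ) : ℤ) ≤
        2 * (∑ τ ∈ Finset.range j, (z τ : ℤ)) - ((N : ℤ) - (g : ℤ)))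
    (jRR : ℕ) (hjRR1 : jRR ≤ Nbar)
    (hjRR2 : ∑ τ ∈ Finset.range jRR, z τ ≤ N - g)
    (hjRR3 : ∀ j ≤ Nbar, ∑ τ ∈ Finset.range j, z τ ≤ N - g → j ≤ jRR)
    (K : Fin q → ℕ) (jf : Fin q → ℕ → ℕ)
    (henum : ∀ i : Fin q, 0 < c Nbar i →
      1 ≤ K i ∧
      jf i (K i) = Nbar ∧
      (∀ ℓ ℓ', ℓ < ℓ' → ℓ' < K i → jf i ℓ < jf i ℓ') ∧
      (∀ ℓ < K i, jf i ℓ < Nbar ∧ c (jf i ℓ) i < c (jf i ℓ + 1) i) ∧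
      (∀ j < Nbar, c j i < c (j + 1) i → ∃ ℓ < K i, jf i ℓ = j))
    (βb : ℝ) (hβb0 : 0 ≤ βb) (hβblt : βb < 1 / 2)
    (hβle : ∀ i : Fin q, β i ≤ βb) :
    (∑ i ∈ Finset.univ.filter (fun i : Fin q => 0 < c Nbar i),
      ((1 / 2 * (c (jf i 1) i : ℝ) + β i) * r (jf i 0) +
        ∑ ℓ ∈ Finset.Ico 1 (K i),
          1 / 2 * ((c (jf i (ℓ + 1)) i : ℝ) - (c (jf i (ℓ - 1)) i : ℝ)) * r (jf i ℓ)))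
    ≤ (∑ j ∈ Finset.range (Nbar + 1),
        (if j < jRR then (z j : ℝ)
         else if j = jRR then
           (z j : ℝ) + ((∑ τ ∈ Finset.range (jRR + 1), (z τ : ℝ)) - ((N : ℝ) - (g : ℝ)))
         else 2 * (z j : ℝ)) * r j)
      - (1 / 2 - βb) * (if z Nbar = 1 then r (Nbar - 1) else 0) :=
  stmt9_general Nbar q g N hgN z hz r hrdec hrN c hc0 hcmono β hRR hCliff jRR hjRR2 hjRR3 K jf henum
    βb hβb0 hβblt hβle
end

section
/- Let N ≥ 1 and g ≥ 1 be integers with g ≤ N, and let r_0 ≥ r_1 ≥ ⋯ ≥ r_{N−1} ≥ r_N = 0 be nonnegative real numbers with ∑_{j=0}^{N−1} r_j = 1. Then r_{N−g+1} + r_{N−g+2} + ⋯ + r_N ≤ (g−1)/N. -/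
/-!
With `m = N - g + 1`, the tail `r_m + ⋯ + r_{N-1}` has `N - m` terms, each at most `r_m`, while
the head `r_0 + ⋯ + r_{m-1}` has `m` terms, each at least `r_m`. Hence
`m · tail ≤ (N - m) · head`, i.e. `N · tail ≤ (N - m) · (head + tail) = N - m ≤ g - 1`.
-/

open Finset

section AntitoneSums

variable {K : Type*} [Field K] [LinearOrder K] [IsStrictOrderedRing K]
  {r : ℕ → K} {m N : ℕ}

lemma AntitoneOn.mul_tail_sum_le_mul_head_sum (hr : AntitoneOn r (Set.Iic N)) (hm : m ≤ N) :
    (m : K) * ∑ j ∈ Ico m N, r j ≤ ((N - m : ℕ) : K) * ∑ j ∈ range m, r j := by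
  have htail : ∑ j ∈ Ico m N, r j ≤ ((N - m : ℕ) : K) * r m := by
    simpa using sum_le_sum fun j (hj : j ∈ Ico m N) =>
      hr (Set.mem_Iic.2 hm) (Set.mem_Iic.2 (mem_Ico.1 hj).2.le) (mem_Ico.1 hj).1
  have hhead : (m : K) * r m ≤ ∑ j ∈ range m, r j := by
    simpa using sum_le_sum fun j (hj : j ∈ range m) =>
      hr (Set.mem_Iic.2 ((mem_range.1 hj).le.trans hm)) (Set.mem_Iic.2 hm) (mem_range.1 hj).le
  calc (m : K) * ∑ j ∈ Ico m N, r j ≤ m * (((N - m : ℕ) : K) * r m) := by gcongr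
    _ = ((N - m : ℕ) : K) * (m * r m) := by ring
    _ ≤ ((N - m : ℕ) : K) * ∑ j ∈ range m, r j := by gcongr

lemma AntitoneOn.mul_tail_sum_le_mul_total_sum (hr : AntitoneOn r (Set.Iic N)) (hm : m ≤ N) :
    (N : K) * ∑ j ∈ Ico m N, r j ≤ ((N - m : ℕ) : K) * ∑ j ∈ range N, r j := by
  have hN : (N : K) = m + ((N - m : ℕ) : K) := by rw [Nat.cast_sub hm]; ring
  rw [← sum_range_add_sum_Ico r hm, hN]
  linarith [hr.mul_tail_sum_le_mul_head_sum hm (K := K)]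

end AntitoneSums

theorem stmt11_general (N g : ℕ) (hg : 1 ≤ g)
    (r : ℕ → ℝ)
    (hmono : ∀ j < N, r (j + 1) ≤ r j)
    (hrN : r N = 0)
    (hsum : ∑ j ∈ Finset.range N, r j = 1) :
    ∑ j ∈ Finset.Icc (N - g + 1) N, r j ≤ ((g : ℝ) - 1) / N := by
  have hr : AntitoneOn r (Set.Iic N) :=
    antitoneOn_of_add_one_le Set.ordConnected_Iic fun j _ _ hj => hmono j hj
  have hNpos : 0 < N := Nat.pos_of_ne_zero <| by rintro rfl; simp at hsum
  have hm : N - g + 1 ≤ N := by omega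
  have hcard : ((N - (N - g + 1) : ℕ) : ℝ) ≤ (g : ℝ) - 1 := by
    rw [le_sub_iff_add_le]; exact_mod_cast (by omega : N - (N - g + 1) + 1 ≤ g)
  have key := hr.mul_tail_sum_le_mul_total_sum hm
  rw [hsum, mul_one] at key
  rw [← Ico_add_one_right_eq_Icc, sum_Ico_succ_top hm, hrN, add_zero,
    le_div_iff₀ (by exact_mod_cast hNpos)]
  linarith

/-- The paper's Lemma `Clifftailbound`: the sum of the last `g` normalized
weights is bounded by `(g - 1)/N`. -/
theorem stmt11 (N g : ℕ) (hN : 1 ≤ N) (hg : 1 ≤ g) (hgN : g ≤ N)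
    (r : ℕ → ℝ)
    (hmono : ∀ j < N, r (j + 1) ≤ r j)
    (hnonneg : ∀ j ≤ N, 0 ≤ r j)
    (hrN : r N = 0)
    (hsum : ∑ j ∈ Finset.range N, r j = 1) :
    ∑ j ∈ Finset.Icc (N - g + 1) N, r j ≤ ((g : ℝ) - 1) / N :=
  stmt11_general N g hg r hmono hrN hsum
end

section
/- Let g ≥ 2 and N be integers with N ≥ 2g − 2, let t be a real number with 0 ≤ t ≤ 1/2, and let r_0 ≥ r_1 ≥ ⋯ ≥ r_{N−1} ≥ r_N = 0 be nonnegative real numbers with ∑_{j=0}^{N−1} r_j = 1. Then (r_{N−g+1} + r_{N−g+2} + ⋯ + r_N) − t·r_{N−1} ≤ (g − 1 − t)/N. -/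
/-!
The left-hand side is a linear functional `∑ wⱼ rⱼ` on nonincreasing sequences with `r_N = 0`.
By Abel summation it is a nonnegative combination of its values on the step sequences
`r₀ = ⋯ = r_{k-1} = 1`, `r_k = ⋯ = 0` (the vertices of the simplex of normalized weights), so it is
bounded by `c · ∑ rⱼ` as soon as every partial sum `∑_{j<k} wⱼ` is at most `c k`. For the tail
weights and `c = (g - 1 - t)/N` the partial sums are `(k - (N - g + 1))⁺`, plus `-t` at `k = N`, and
the required bound is a linear inequality in `k`, with equality at `k = N`.
-/

open Finset

theorem sum_range_mul_le_of_sum_range_le {n : ℕ} {w r : ℕ → ℝ} {c : ℝ}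
    (hmono : ∀ j, j + 1 < n → r (j + 1) ≤ r j) (hlast : 0 ≤ r (n - 1))
    (hw : ∀ k ≤ n, ∑ j ∈ range k, w j ≤ c * k) :
    ∑ j ∈ range n, w j * r j ≤ c * ∑ j ∈ range n, r j := by
  have hconst (k : ℕ) : ∑ _j ∈ range k, c = c * k := by simp [mul_comm]
  calc ∑ j ∈ range n, w j * r j = ∑ j ∈ range n, r j • w j := by simp only [smul_eq_mul, mul_comm]
    _ = r (n - 1) • ∑ j ∈ range n, w j
          - ∑ i ∈ range (n - 1), (r (i + 1) - r i) • ∑ j ∈ range (i + 1), w j :=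
        sum_range_by_parts r w n
    _ ≤ r (n - 1) • ∑ _j ∈ range n, c
          - ∑ i ∈ range (n - 1), (r (i + 1) - r i) • ∑ _j ∈ range (i + 1), c := by
        simp only [smul_eq_mul, hconst]
        refine sub_le_sub (mul_le_mul_of_nonneg_left (hw n le_rfl) hlast)
          (sum_le_sum fun i hi => ?_)
        have hi : i + 1 < n := by grind
        exact mul_le_mul_of_nonpos_left (hw _ hi.le) (sub_nonpos.2 (hmono i hi))
    _ = c * ∑ j ∈ range n, r j := by
        rw [← sum_range_by_parts r (fun _ => c) n, mul_sum]
        simp only [smul_eq_mul, mul_comm]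

def tailWeight (N g : ℕ) (t : ℝ) (j : ℕ) : ℝ :=
  (if N - g + 1 ≤ j then 1 else 0) - if j = N - 1 then t else 0

theorem sum_range_tailWeight_mul {N g : ℕ} {t : ℝ} {r : ℕ → ℝ} (hN : 0 < N) (hrN : r N = 0) :
    ∑ j ∈ range N, tailWeight N g t j * r j
      = (∑ j ∈ Icc (N - g + 1) N, r j) - t * r (N - 1) := by
  have hIcc : Icc (N - g + 1) N = {j ∈ range (N + 1) | N - g + 1 ≤ j} := by
    ext j
    simp only [mem_Icc, mem_filter, mem_range]
    omega
  rw [hIcc, sum_filter, sum_range_succ, hrN, ite_self, add_zero]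
  simp [tailWeight, sub_mul, sum_sub_distrib, ite_mul, hN]

theorem sum_range_tailWeight (N g k : ℕ) (t : ℝ) :
    ∑ j ∈ range k, tailWeight N g t j
      = ((k - (N - g + 1) : ℕ) : ℝ) - if N - 1 < k then t else 0 := by
  simp only [tailWeight, sum_sub_distrib, sum_ite_eq', mem_range, sum_boole]
  rw [range_eq_Ico, Ico_filter_le, zero_max, Nat.card_Ico]

theorem sum_range_tailWeight_le {N g k : ℕ} {t : ℝ} (hg : 2 ≤ g) (hN : 2 * g - 2 ≤ N)
    (ht : t ≤ 1 / 2) (hk : k ≤ N) :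
    ∑ j ∈ range k, tailWeight N g t j ≤ ((g : ℝ) - 1 - t) / N * k := by
  have hNpos : (0 : ℝ) < N := by norm_cast; omega
  have hgR : (2 : ℝ) ≤ g := by exact_mod_cast hg
  have hNR : 2 * (g : ℝ) ≤ N + 2 := by exact_mod_cast (by omega : 2 * g ≤ N + 2)
  rw [sum_range_tailWeight, div_mul_eq_mul_div, le_div_iff₀ hNpos]
  obtain rfl | hk := hk.eq_or_lt
  · rw [if_pos (by omega), show k - (k - g + 1) = g - 1 by omega, Nat.cast_sub (by omega),
      Nat.cast_one]
  rw [if_neg (by omega), sub_zero]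
  obtain hk' | hk' := le_or_gt k (N - g + 1)
  · rw [Nat.sub_eq_zero_of_le hk', Nat.cast_zero, zero_mul]
    exact mul_nonneg (by linarith) k.cast_nonneg
  · rw [Nat.cast_sub hk'.le]
    have hkR : (k : ℝ) + 1 ≤ N := by exact_mod_cast hk
    push_cast [show g ≤ N by omega]
    nlinarith [mul_nonneg (by linarith : (0 : ℝ) ≤ N - 1 - k) (by linarith : (0 : ℝ) ≤ N - g + 1),
      mul_nonneg (by linarith : (0 : ℝ) ≤ 1 / 2 - t) k.cast_nonneg]

theorem stmt12_general (N g : ℕ) (hg : 2 ≤ g) (hN : 2 * g - 2 ≤ N)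
    (t : ℝ) (ht : t ≤ 1 / 2)
    (r : ℕ → ℝ)
    (hmono : ∀ j < N, r (j + 1) ≤ r j)
    (hnonneg : ∀ j ≤ N, 0 ≤ r j)
    (hrN : r N = 0)
    (hsum : ∑ j ∈ Finset.range N, r j = 1) :
    (∑ j ∈ Finset.Icc (N - g + 1) N, r j) - t * r (N - 1)
      ≤ ((g : ℝ) - 1 - t) / N := by
  rw [← sum_range_tailWeight_mul (by omega) hrN]
  calc ∑ j ∈ range N, tailWeight N g t j * r j
        ≤ ((g : ℝ) - 1 - t) / N * ∑ j ∈ range N, r j :=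
      sum_range_mul_le_of_sum_range_le (fun j hj => hmono j (by omega)) (hnonneg _ (by omega))
        fun _ hk => sum_range_tailWeight_le hg hN ht hk
    _ = ((g : ℝ) - 1 - t) / N := by rw [hsum, mul_one]

/-- The improved tail bound (inequality (ClifftailboundB)): the sum of the
last `g` normalized weights minus `t` times the next-to-last weight is at most
`(g - 1 - t)/N`. -/
theorem stmt12 (N g : ℕ) (hg : 2 ≤ g) (hN : 2 * g - 2 ≤ N)
    (t : ℝ) (ht0 : 0 ≤ t) (ht : t ≤ 1 / 2)
    (r : ℕ → ℝ)
    (hmono : ∀ j < N, r (j + 1) ≤ r j)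
    (hnonneg : ∀ j ≤ N, 0 ≤ r j)
    (hrN : r N = 0)
    (hsum : ∑ j ∈ Finset.range N, r j = 1) :
    (∑ j ∈ Finset.Icc (N - g + 1) N, r j) - t * r (N - 1)
      ≤ ((g : ℝ) - 1 - t) / N :=
  stmt12_general N g hg hN t ht r hmono hnonneg hrN hsum
end
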